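/- arXiv:2509.06761 — 6 statements merged into one kernel-verified Lean document; each statement's English description precedes it below -/
import Mathlib

section
/- Let Γ be a numerical semigroup and ℓ ≥ 1. Every Γ-subsemimodule Δ ⊆ Γ with #(Γ \ Δ) = ℓ + 1 arises by deleting a minimal generator from some Γ-subsemimodule Δ' with #(Γ \ Δ') = ℓ; specifically, one may take Δ' = Δ ∪ {max(Γ \ Δ)} and delete the generator max(Γ \ Δ). -/
/-!
Since `γ := max (Γ \ Δ)` is the largest element of `Γ` missing from `Δ`, every `γ + g` with
`g ∈ Γ` nonzero lies in `Δ`; hence `Δ ∪ {γ}` is again a `Γ`-subsemimodule. As `γ ∉ Δ` and `Δ` is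
closed under translation by `Γ`, `γ` cannot be written as `d + g` with `d ∈ Δ ∪ {γ}` and
`0 ≠ g ∈ Γ`, so it is a minimal generator of `Δ ∪ {γ}`, and deleting it gives back `Δ`.
-/

namespace Set

theorem add_mem_insert_of_isGreatest_diff {M : Type*} [AddCommMonoid M] [PartialOrder M]
    [IsOrderedCancelAddMonoid M] [CanonicallyOrderedAdd M] {Γ Δ : Set M} {γ : M}
    (hΓ : ∀ a ∈ Γ, ∀ b ∈ Γ, a + b ∈ Γ) (hΔ : ∀ d ∈ Δ, ∀ g ∈ Γ, d + g ∈ Δ)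
    (hγ : IsGreatest (Γ \ Δ) γ) :
    ∀ d ∈ insert γ Δ, ∀ g ∈ Γ, d + g ∈ insert γ Δ := by
  rintro d (rfl | hd) g hg
  · by_contra hout
    have hgap : d + g ∈ Γ \ Δ := ⟨hΓ d hγ.1.1 g hg, fun h ↦ hout (mem_insert_of_mem _ h)⟩
    have hg0 : g = 0 := nonpos_iff_eq_zero.mp (add_le_iff_nonpos_right d |>.mp (hγ.2 hgap))
    exact hout (by simp [hg0])
  · exact mem_insert_of_mem _ (hΔ d hd g hg)

theorem not_exists_add_eq_of_notMem {M : Type*} [AddLeftCancelMonoid M] {Γ Δ : Set M} {γ : M}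
    (hΔ : ∀ d ∈ Δ, ∀ g ∈ Γ, d + g ∈ Δ) (hγ : γ ∉ Δ) :
    ¬ ∃ d ∈ insert γ Δ, ∃ g ∈ Γ, g ≠ 0 ∧ γ = d + g := by
  rintro ⟨d, rfl | hd, g, hg, hg0, heq⟩
  · exact hg0 (left_eq_add.mp heq)
  · exact hγ (heq ▸ hΔ d hd g hg)

end Set

theorem stmt3_general (Γ Δ : Set ℕ) (ℓ : ℕ)
    (hΓadd : ∀ a ∈ Γ, ∀ b ∈ Γ, a + b ∈ Γ)
    (hΔΓ : Δ ⊆ Γ) (hmod : ∀ d ∈ Δ, ∀ g ∈ Γ, d + g ∈ Δ)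
    (hcard : (Γ \ Δ).ncard = ℓ + 1)
    (γΔ : ℕ) (hγΔ : γΔ ∈ Γ \ Δ) (hmax : ∀ x ∈ Γ \ Δ, x ≤ γΔ) :
    (Δ ∪ {γΔ} ⊆ Γ) ∧ (∀ d ∈ Δ ∪ {γΔ}, ∀ g ∈ Γ, d + g ∈ Δ ∪ {γΔ}) ∧
      (Γ \ (Δ ∪ {γΔ})).ncard = ℓ ∧ γΔ ∈ Δ ∪ {γΔ} ∧
      (¬ ∃ d ∈ Δ ∪ {γΔ}, ∃ g ∈ Γ, g ≠ 0 ∧ γΔ = d + g) ∧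
      (Δ ∪ {γΔ}) \ {γΔ} = Δ := by
  have hcard' : (Γ \ (Δ ∪ {γΔ})).ncard = ℓ := by
    rw [← Set.sdiff_sdiff, Set.ncard_sdiff_singleton_of_mem hγΔ, hcard, Nat.add_sub_cancel]
  rw [Set.union_singleton] at hcard' ⊢
  exact ⟨Set.insert_subset hγΔ.1 hΔΓ,
    Set.add_mem_insert_of_isGreatest_diff hΓadd hmod ⟨hγΔ, hmax⟩, hcard', Set.mem_insert _ _,
    Set.not_exists_add_eq_of_notMem hmod hγΔ.2, Set.insert_sdiff_self_of_notMem hγΔ.2⟩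

/-- every Γ-subsemimodule with complement of size ℓ+1 arises by
deleting the minimal generator max(Γ \ Δ) from Δ' := Δ ∪ {max(Γ \ Δ)}, a
Γ-subsemimodule with complement of size ℓ. -/
theorem stmt3 (Γ Δ : Set ℕ) (ℓ : ℕ) (hℓ : 1 ≤ ℓ)
    (hΓ0 : 0 ∈ Γ) (hΓadd : ∀ a ∈ Γ, ∀ b ∈ Γ, a + b ∈ Γ) (hΓcof : (Γᶜ).Finite)
    (hΔΓ : Δ ⊆ Γ) (hmod : ∀ d ∈ Δ, ∀ g ∈ Γ, d + g ∈ Δ)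
    (hfin : (Γ \ Δ).Finite) (hcard : (Γ \ Δ).ncard = ℓ + 1)
    (γΔ : ℕ) (hγΔ : γΔ ∈ Γ \ Δ) (hmax : ∀ x ∈ Γ \ Δ, x ≤ γΔ) :
    (Δ ∪ {γΔ} ⊆ Γ) ∧ (∀ d ∈ Δ ∪ {γΔ}, ∀ g ∈ Γ, d + g ∈ Δ ∪ {γΔ}) ∧
      (Γ \ (Δ ∪ {γΔ})).ncard = ℓ ∧ γΔ ∈ Δ ∪ {γΔ} ∧
      (¬ ∃ d ∈ Δ ∪ {γΔ}, ∃ g ∈ Γ, g ≠ 0 ∧ γΔ = d + g) ∧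
      (Δ ∪ {γΔ}) \ {γΔ} = Δ :=
  stmt3_general Γ Δ ℓ hΓadd hΔΓ hmod hcard γΔ hγΔ hmax
end

section
/- Let Γ = ⟨k, n⟩ with gcd(k, n) = 1 and k < n. There is a bijection between Γ-subsemimodules of Γ and sequences (φ_0, φ_1, …, φ_{k−1}) of natural numbers satisfying φ_{k−1} ≤ φ_{k−2} ≤ ⋯ ≤ φ_0 ≤ φ_{k−1} + n; explicitly, the sequence φ corresponds to the Γ-subsemimodule generated by {φ_j·k + j·n : j = 0, …, k−1}, and #(Γ \ Δ) = φ_0 + φ_1 + ⋯ + φ_{k−1}. -/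
/-!
Since `k` and `n` are coprime, every element of `Γ = ⟨k, n⟩` is uniquely `a * k + j * n` with
`j < k`, so a `Γ`-subsemimodule `Δ` is determined by the least `a = φ j` with `a * k + j * n ∈ Δ`
in each residue class `j`. Adding `n` moves class `j` to class `j + 1`, and class `k - 1` to class
`0` at the cost of `n` copies of `k`; this is exactly the condition `φ_{k-1} ≤ ⋯ ≤ φ_0 ≤ φ_{k-1} + n`.
The gaps of `Δ` in `Γ` are the `a * k + j * n` with `a < φ j`, whence `#(Γ \ Δ) = ∑ φ j`.
-/

namespace TwoGeneratorSemigroup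

variable {k n : ℕ}

def semigroupOf (k n : ℕ) : Set ℕ := {m | ∃ a b : ℕ, m = a * k + b * n}

def moduleOf (n : ℕ) (φ : Fin k → ℕ) : Set ℕ :=
  ⋃ j : Fin k, {m | ∃ g ∈ semigroupOf k n, m = φ j * k + (j : ℕ) * n + g}

def Admissible (n : ℕ) (hk : 0 < k) (φ : Fin k → ℕ) : Prop :=
  (∀ i j : Fin k, i ≤ j → φ j ≤ φ i) ∧ φ ⟨0, hk⟩ ≤ φ ⟨k - 1, Nat.sub_lt hk one_pos⟩ + n

def IsSemimodule (k n : ℕ) (Δ : Set ℕ) : Prop :=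
  Δ.Nonempty ∧ Δ ⊆ semigroupOf k n ∧ ∀ d ∈ Δ, ∀ g ∈ semigroupOf k n, d + g ∈ Δ

theorem mul_add_mul_mem_semigroupOf (a b : ℕ) : a * k + b * n ∈ semigroupOf k n := ⟨a, b, rfl⟩

theorem mul_mem_semigroupOf_left (c : ℕ) : c * k ∈ semigroupOf k n := ⟨c, 0, by ring⟩

theorem mul_mem_semigroupOf_right (c : ℕ) : c * n ∈ semigroupOf k n := ⟨0, c, by ring⟩

theorem add_mem_semigroupOf {x y : ℕ} (hx : x ∈ semigroupOf k n) (hy : y ∈ semigroupOf k n) :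
    x + y ∈ semigroupOf k n := by
  obtain ⟨a, b, rfl⟩ := hx
  obtain ⟨a', b', rfl⟩ := hy
  exact ⟨a + a', b + b', by ring⟩

theorem mul_add_mul_eq_mod_div (a b : ℕ) :
    a * k + b * n = (a + b / k * n) * k + b % k * n := by
  conv_lhs => rw [← Nat.mod_add_div b k]
  ring

theorem exists_fin_of_mem_semigroupOf (hk : 0 < k) {m : ℕ} (hm : m ∈ semigroupOf k n) :
    ∃ (j : Fin k) (a : ℕ), m = a * k + (j : ℕ) * n := by
  obtain ⟨a, b, rfl⟩ := hm
  exact ⟨⟨b % k, Nat.mod_lt b hk⟩, a + b / k * n, mul_add_mul_eq_mod_div a b⟩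

theorem eq_and_eq_of_mul_add_mul_eq (hcop : k.Coprime n) {a a' j j' : ℕ} (hj : j < k)
    (hj' : j' < k) (h : a * k + j * n = a' * k + j' * n) : a = a' ∧ j = j' := by
  have hmod : j * n ≡ j' * n [MOD k] := by
    simpa only [Nat.ModEq, Nat.mul_comm a k, Nat.mul_comm a' k, Nat.mul_add_mod] using
      congrArg (· % k) h
  obtain rfl : j = j' := (Nat.ModEq.cancel_right_of_coprime hcop hmod).eq_of_lt_of_lt hj hj'
  exact ⟨Nat.eq_of_mul_eq_mul_right (by omega) (Nat.add_right_cancel h), rfl⟩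

section Admissible

variable {hk : 0 < k} {φ : Fin k → ℕ}

/-- Adding `s - i` copies of `n` to the generator of class `i` lands in class `s % k`, with
`s / k * n` extra copies of `k`. -/
theorem Admissible.apply_le_add (hφ : Admissible n hk φ) {i j : Fin k} {s : ℕ}
    (hi : (i : ℕ) ≤ s) (hj : (j : ℕ) = s % k) : φ j ≤ φ i + s / k * n := by
  rcases Nat.eq_zero_or_pos (s / k) with hs | hs
  · have hsk : s < k := (Nat.div_eq_zero_iff.mp hs).resolve_left hk.ne'
    rw [Nat.mod_eq_of_lt hsk] at hj
    exact le_add_right (hφ.1 i j (Fin.le_def.mpr (hj ▸ hi)))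
  · calc φ j ≤ φ ⟨0, hk⟩ := hφ.1 _ _ (Fin.le_def.mpr (Nat.zero_le _))
      _ ≤ φ ⟨k - 1, Nat.sub_lt hk one_pos⟩ + n := hφ.2
      _ ≤ φ i + n := by
        gcongr
        exact hφ.1 _ _ (Fin.le_def.mpr (Nat.le_sub_one_of_lt i.isLt))
      _ ≤ φ i + s / k * n := by gcongr; exact Nat.le_mul_of_pos_left n hs

theorem mul_add_mem_moduleOf_iff (hcop : k.Coprime n) (hφ : Admissible n hk φ) (j : Fin k)
    (a : ℕ) : a * k + (j : ℕ) * n ∈ moduleOf n φ ↔ φ j ≤ a := by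
  simp only [moduleOf, Set.mem_iUnion, Set.mem_ofPred_eq]
  constructor
  · rintro ⟨i, _, ⟨a', b', rfl⟩, h⟩
    have hrep : φ i * k + i * n + (a' * k + b' * n)
        = (φ i + a' + (i + b') / k * n) * k + (i + b') % k * n := by
      rw [← mul_add_mul_eq_mod_div]; ring
    rw [hrep] at h
    obtain ⟨rfl, hj⟩ := eq_and_eq_of_mul_add_mul_eq hcop j.isLt (Nat.mod_lt _ hk) h
    have hle := hφ.apply_le_add (i := i) (Nat.le_add_right _ b') hj
    omega
  · intro h
    obtain ⟨c, rfl⟩ := Nat.exists_eq_add_of_le h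
    exact ⟨j, c * k, mul_mem_semigroupOf_left c, by ring⟩

theorem moduleOf_injOn (hcop : k.Coprime n) :
    Set.InjOn (moduleOf n) {φ | Admissible n hk φ} := by
  intro φ hφ ψ hψ h
  funext j
  have hiff (a : ℕ) : φ j ≤ a ↔ ψ j ≤ a := by
    rw [← mul_add_mem_moduleOf_iff hcop hφ, ← mul_add_mem_moduleOf_iff hcop hψ, h]
  exact le_antisymm ((hiff _).mpr le_rfl) ((hiff _).mp le_rfl)

theorem semigroupOf_diff_moduleOf (hcop : k.Coprime n) (hφ : Admissible n hk φ) :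
    semigroupOf k n \ moduleOf n φ =
      ((Finset.univ.sigma fun j => Finset.range (φ j)).image
        fun x : Σ _ : Fin k, ℕ => x.2 * k + (x.1 : ℕ) * n : Finset ℕ) := by
  ext m
  simp only [Finset.coe_image, Set.mem_image, Finset.mem_coe, Finset.mem_sigma,
    Finset.mem_univ, Finset.mem_range, true_and, Sigma.exists]
  constructor
  · rintro ⟨hm, hnot⟩
    obtain ⟨j, a, rfl⟩ := exists_fin_of_mem_semigroupOf hk hm
    exact ⟨j, a, not_le.mp fun h => hnot ((mul_add_mem_moduleOf_iff hcop hφ j a).mpr h), rfl⟩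
  · rintro ⟨j, a, ha, rfl⟩
    exact ⟨mul_add_mul_mem_semigroupOf a j,
      fun h => (mul_add_mem_moduleOf_iff hcop hφ j a).mp h |>.not_gt ha⟩

theorem ncard_semigroupOf_diff_moduleOf (hcop : k.Coprime n) (hφ : Admissible n hk φ) :
    (semigroupOf k n \ moduleOf n φ).ncard = ∑ j, φ j := by
  rw [semigroupOf_diff_moduleOf hcop hφ, Set.ncard_coe_finset, Finset.card_image_of_injOn,
    Finset.card_sigma]
  · simp only [Finset.card_range]
  · rintro ⟨i, a⟩ - ⟨j, b⟩ - h
    obtain ⟨rfl, hij⟩ := eq_and_eq_of_mul_add_mul_eq hcop i.isLt j.isLt h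
    obtain rfl := Fin.ext hij
    rfl

end Admissible

theorem isSemimodule_moduleOf (hk : 0 < k) (φ : Fin k → ℕ) : IsSemimodule k n (moduleOf n φ) := by
  refine ⟨⟨_, Set.mem_iUnion.mpr ⟨⟨0, hk⟩, 0, ⟨0, 0, by ring⟩, rfl⟩⟩, ?_, ?_⟩
  · intro m hm
    obtain ⟨i, g, hg, rfl⟩ := Set.mem_iUnion.mp hm
    exact add_mem_semigroupOf (mul_add_mul_mem_semigroupOf _ _) hg
  · intro d hd g hg
    obtain ⟨i, g', hg', rfl⟩ := Set.mem_iUnion.mp hd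
    exact Set.mem_iUnion.mpr ⟨i, g' + g, add_mem_semigroupOf hg' hg, by ring⟩

section Semimodule

variable {Δ : Set ℕ} (hk : 0 < k) (hΔ : IsSemimodule k n Δ)
include hk hΔ

theorem IsSemimodule.exists_mul_add_mem (j : Fin k) : ∃ a, a * k + (j : ℕ) * n ∈ Δ := by
  obtain ⟨d, hd⟩ := hΔ.1
  obtain ⟨j₀, a, rfl⟩ := exists_fin_of_mem_semigroupOf hk (hΔ.2.1 hd)
  obtain ⟨t, ht⟩ : ∃ t, (j₀ : ℕ) + t = j + k := ⟨j + k - j₀, by omega⟩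
  refine ⟨a + n, ?_⟩
  have h := hΔ.2.2 _ hd _ (mul_mem_semigroupOf_right t)
  have heq : a * k + j₀ * n + t * n = (a + n) * k + j * n := by
    rw [add_assoc, ← add_mul, ht]; ring
  rwa [heq] at h

open Classical in
noncomputable def IsSemimodule.minCoeff : Fin k → ℕ :=
  fun j => Nat.find (hΔ.exists_mul_add_mem hk j)

theorem IsSemimodule.mul_add_mem_iff (j : Fin k) (a : ℕ) :
    a * k + (j : ℕ) * n ∈ Δ ↔ hΔ.minCoeff hk j ≤ a := by
  classical
  refine ⟨fun h => Nat.find_min' _ h, fun h => ?_⟩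
  obtain ⟨c, rfl⟩ := Nat.exists_eq_add_of_le h
  have h := hΔ.2.2 _ (Nat.find_spec (hΔ.exists_mul_add_mem hk j)) _
    (mul_mem_semigroupOf_left c)
  convert h using 1
  simp only [IsSemimodule.minCoeff]
  ring

theorem IsSemimodule.admissible_minCoeff : Admissible n hk (hΔ.minCoeff hk) := by
  constructor
  · intro i j hij
    rw [← hΔ.mul_add_mem_iff]
    have h := hΔ.2.2 _ ((hΔ.mul_add_mem_iff hk i _).mpr le_rfl) _
      (mul_mem_semigroupOf_right (j - i))
    rwa [add_assoc, ← add_mul, Nat.add_sub_cancel' (Fin.le_def.mp hij)] at h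
  · rw [← hΔ.mul_add_mem_iff]
    have h := hΔ.2.2 _ ((hΔ.mul_add_mem_iff hk ⟨k - 1, Nat.sub_lt hk one_pos⟩ _).mpr le_rfl) _
      (mul_mem_semigroupOf_right 1)
    convert h using 1
    change _ + 0 * n = _ * k + (k - 1) * n + 1 * n
    rw [add_assoc, ← add_mul, Nat.sub_add_cancel hk]
    ring

theorem IsSemimodule.moduleOf_minCoeff : moduleOf n (hΔ.minCoeff hk) = Δ := by
  ext m
  constructor
  · intro hm
    obtain ⟨i, g, hg, rfl⟩ := Set.mem_iUnion.mp hm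
    exact hΔ.2.2 _ ((hΔ.mul_add_mem_iff hk i _).mpr le_rfl) g hg
  · intro hm
    obtain ⟨j, a, rfl⟩ := exists_fin_of_mem_semigroupOf hk (hΔ.2.1 hm)
    obtain ⟨c, hc⟩ := Nat.exists_eq_add_of_le ((hΔ.mul_add_mem_iff hk j a).mp hm)
    exact Set.mem_iUnion.mpr ⟨j, c * k, mul_mem_semigroupOf_left c, by rw [hc]; ring⟩

end Semimodule

end TwoGeneratorSemigroup

open TwoGeneratorSemigroup in
theorem stmt8_general (k n : ℕ) (hk : 0 < k) (hcop : Nat.Coprime k n)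
    (Γ : Set ℕ) (hΓ : Γ = {m | ∃ a b : ℕ, m = a * k + b * n})
    (F : (Fin k → ℕ) → Set ℕ)
    (hF : F = fun φ => ⋃ j : Fin k, {m | ∃ g ∈ Γ, m = φ j * k + (j : ℕ) * n + g})
    (valid : (Fin k → ℕ) → Prop)
    (hvalid : valid = fun φ => (∀ i j : Fin k, i ≤ j → φ j ≤ φ i) ∧
      φ ⟨0, hk⟩ ≤ φ ⟨k - 1, Nat.sub_lt hk one_pos⟩ + n)
    (isMod : Set ℕ → Prop)
    (hisMod : isMod = fun Δ => Δ.Nonempty ∧ Δ ⊆ Γ ∧ ∀ d ∈ Δ, ∀ g ∈ Γ, d + g ∈ Δ) :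
    (∀ φ ψ, valid φ → valid ψ → F φ = F ψ → φ = ψ) ∧
    (∀ φ, valid φ → isMod (F φ)) ∧
    (∀ Δ, isMod Δ → ∃ φ, valid φ ∧ F φ = Δ) ∧
    (∀ φ, valid φ → (Γ \ F φ).ncard = ∑ j, φ j) := by
  subst hΓ hF hvalid hisMod
  exact ⟨fun φ ψ hφ hψ h => moduleOf_injOn (n := n) (hk := hk) hcop hφ hψ h,
    fun φ _ => isSemimodule_moduleOf (n := n) hk φ,
    fun Δ hΔ => ⟨_, IsSemimodule.admissible_minCoeff hk hΔ, IsSemimodule.moduleOf_minCoeff hk hΔ⟩,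
    fun φ hφ => ncard_semigroupOf_diff_moduleOf (n := n) hcop hφ⟩

/-- for Γ = ⟨k, n⟩ with gcd(k,n)=1, k < n, Γ-subsemimodules of Γ
are in bijection with sequences (φ_0,…,φ_{k−1}) with
φ_{k−1} ≤ ⋯ ≤ φ_0 ≤ φ_{k−1} + n, via φ ↦ ⋃_j (φ_j k + j n + Γ), and then
#(Γ \ Δ) = ∑ φ_j. -/
theorem stmt8 (k n : ℕ) (hk : 0 < k) (hkn : k < n) (hcop : Nat.Coprime k n)
    (Γ : Set ℕ) (hΓ : Γ = {m | ∃ a b : ℕ, m = a * k + b * n})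
    (F : (Fin k → ℕ) → Set ℕ)
    (hF : F = fun φ => ⋃ j : Fin k, {m | ∃ g ∈ Γ, m = φ j * k + (j : ℕ) * n + g})
    (valid : (Fin k → ℕ) → Prop)
    (hvalid : valid = fun φ => (∀ i j : Fin k, i ≤ j → φ j ≤ φ i) ∧
      φ ⟨0, hk⟩ ≤ φ ⟨k - 1, Nat.sub_lt hk one_pos⟩ + n)
    (isMod : Set ℕ → Prop)
    (hisMod : isMod = fun Δ => Δ.Nonempty ∧ Δ ⊆ Γ ∧ ∀ d ∈ Δ, ∀ g ∈ Γ, d + g ∈ Δ) :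
    (∀ φ ψ, valid φ → valid ψ → F φ = F ψ → φ = ψ) ∧
    (∀ φ, valid φ → isMod (F φ)) ∧
    (∀ Δ, isMod Δ → ∃ φ, valid φ ∧ F φ = Δ) ∧
    (∀ φ, valid φ → (Γ \ F φ).ncard = ∑ j, φ j) :=
  stmt8_general k n hk hcop Γ hΓ F hF valid hvalid isMod hisMod
end

section
/- Let Γ = ⟨2, 2d+1⟩ for d ≥ 1, and let 1 ≤ ℓ ≤ 2d. Then every Γ-subsemimodule Δ ⊆ Γ with #(Γ \ Δ) = ℓ is of one of the following forms: (i) if ℓ is odd, Δ = (2i + Γ) ∪ (2d+1+2(ℓ−i) + Γ) for some integer i with ℓ/2 < i ≤ ℓ; (ii) if ℓ is even, either Δ is as in (i) for some ℓ/2 < i ≤ ℓ, or Δ = ℓ + Γ. In particular, the number of such Δ equals the number of integers in the interval [ℓ/2, ℓ]. -/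
/-! A Γ-subsemimodule Δ ⊆ Γ is determined by its least even element `2 * i` and its least odd
element `2 * d + 1 + 2 * j`: adding `2 ∈ Γ` shows that Δ contains everything of the right parity
above them. Adding `2 * d + 1 ∈ Γ` forces `j ≤ i`, the complement Γ \ Δ has `i + j = ℓ` elements,
and conversely every pair with `j ≤ i ≤ j + 2 * d + 1` gives a semimodule. For `ℓ ≤ 2 * d` the
upper bound is automatic, so the semimodules correspond to the `i` with `ℓ / 2 ≤ i ≤ ℓ`;
`i = ℓ / 2` is the principal semimodule `ℓ + Γ`. -/

namespace HyperellipticSemigroup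

/-- The numerical semigroup `⟨2, 2 * d + 1⟩`. -/
def semigroup (d : ℕ) : Set ℕ := {m | m % 2 = 0 ∨ 2 * d + 1 ≤ m}

def IsSemimodule (d : ℕ) (Δ : Set ℕ) : Prop := ∀ x ∈ Δ, ∀ g ∈ semigroup d, x + g ∈ Δ

def subsemimodule (d i j : ℕ) : Set ℕ :=
  {m | (m % 2 = 0 ∧ 2 * i ≤ m) ∨ (m % 2 = 1 ∧ 2 * d + 1 + 2 * j ≤ m)}

variable {d : ℕ}

theorem setOf_eq_semigroup (d : ℕ) :
    {m : ℕ | ∃ a b : ℕ, m = 2 * a + (2 * d + 1) * b} = semigroup d := by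
  ext m
  simp only [Set.mem_ofPred_eq, semigroup]
  constructor
  · rintro ⟨a, b, rfl⟩
    rcases Nat.even_or_odd b with ⟨c, rfl⟩ | ⟨c, rfl⟩
    · have : 2 * a + (2 * d + 1) * (c + c) = 2 * (a + (2 * d + 1) * c) := by ring
      omega
    · have : 2 * a + (2 * d + 1) * (2 * c + 1) = 2 * (a + (2 * d + 1) * c) + (2 * d + 1) := by
        ring
      omega
  · intro h
    rcases Nat.mod_two_eq_zero_or_one m with hm | hm
    · exact ⟨m / 2, 0, by omega⟩
    · exact ⟨(m - (2 * d + 1)) / 2, 1, by omega⟩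

theorem setOf_add_semigroup (d c : ℕ) :
    {m | ∃ g ∈ semigroup d, m = c + g} =
      {m | (m % 2 = c % 2 ∧ c ≤ m) ∨ (m % 2 ≠ c % 2 ∧ c + (2 * d + 1) ≤ m)} := by
  ext m
  simp only [Set.mem_ofPred_eq, semigroup]
  constructor
  · rintro ⟨g, hg, rfl⟩
    omega
  · intro h
    exact ⟨m - c, by omega, by omega⟩

theorem setOf_add_semigroup_union_eq_subsemimodule {i j : ℕ} (hji : j ≤ i)
    (hij : i ≤ j + 2 * d + 1) :
    {m | ∃ g ∈ semigroup d, m = 2 * i + g} ∪ {m | ∃ g ∈ semigroup d, m = 2 * d + 1 + 2 * j + g} =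
      subsemimodule d i j := by
  ext m
  simp only [setOf_add_semigroup, subsemimodule, Set.mem_union, Set.mem_ofPred_eq]
  omega

theorem setOf_add_semigroup_eq_subsemimodule (d i : ℕ) :
    {m | ∃ g ∈ semigroup d, m = 2 * i + g} = subsemimodule d i i := by
  ext m
  simp only [setOf_add_semigroup, subsemimodule, Set.mem_ofPred_eq]
  omega

theorem subsemimodule_subset (d i j : ℕ) : subsemimodule d i j ⊆ semigroup d := by
  intro m hm
  simp only [subsemimodule, semigroup, Set.mem_ofPred_eq] at hm ⊢
  omega

theorem isSemimodule_subsemimodule {i j : ℕ} (hji : j ≤ i) (hij : i ≤ j + 2 * d + 1) :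
    IsSemimodule d (subsemimodule d i j) := by
  intro x hx g hg
  simp only [subsemimodule, semigroup, Set.mem_ofPred_eq] at hx hg ⊢
  omega

theorem semigroup_diff_subsemimodule (d i j : ℕ) :
    semigroup d \ subsemimodule d i j =
      ↑((Finset.range i).image (fun a => 2 * a) ∪
        (Finset.range j).image (fun b => 2 * d + 1 + 2 * b)) := by
  ext m
  simp only [semigroup, subsemimodule, Set.mem_sdiff, Set.mem_ofPred_eq, Finset.coe_union,
    Set.mem_union, Finset.coe_image, Set.mem_image, Finset.mem_coe, Finset.mem_range]
  constructor
  · rintro ⟨hG, hN⟩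
    rcases Nat.mod_two_eq_zero_or_one m with hm | hm
    · exact Or.inl ⟨m / 2, by omega, by omega⟩
    · exact Or.inr ⟨(m - (2 * d + 1)) / 2, by omega, by omega⟩
  · rintro (⟨a, ha, rfl⟩ | ⟨b, hb, rfl⟩) <;> omega

theorem ncard_semigroup_diff_subsemimodule (d i j : ℕ) :
    (semigroup d \ subsemimodule d i j).ncard = i + j := by
  rw [semigroup_diff_subsemimodule, Set.ncard_coe_finset, Finset.card_union_of_disjoint,
    Finset.card_image_of_injective _ (fun a b h => by omega),
    Finset.card_image_of_injective _ (fun a b h => by omega),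
    Finset.card_range, Finset.card_range]
  simp only [Finset.disjoint_left, Finset.mem_image, Finset.mem_range]
  omega

theorem subsemimodule_left_injective {a b j k : ℕ}
    (h : subsemimodule d a j = subsemimodule d b k) : a = b := by
  have ha : 2 * a ∈ subsemimodule d b k := h ▸ Or.inl ⟨by omega, le_rfl⟩
  have hb : 2 * b ∈ subsemimodule d a j := h ▸ Or.inl ⟨by omega, le_rfl⟩
  simp only [subsemimodule, Set.mem_ofPred_eq] at ha hb
  omega

theorem semigroup_infinite (d : ℕ) : (semigroup d).Infinite :=
  Set.infinite_of_injective_forall_mem (f := fun a => 2 * a)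
    (fun a b h => by simpa using h)
    (fun a => Or.inl (Nat.mul_mod_right 2 a))

section IsSemimodule

variable {Δ : Set ℕ} (hmod : IsSemimodule d Δ)
include hmod

theorem IsSemimodule.add_two_mul_mem {x : ℕ} (hx : x ∈ Δ) (k : ℕ) : x + 2 * k ∈ Δ := by
  induction k with
  | zero => simpa using hx
  | succ k ih => simpa [Nat.mul_succ, ← add_assoc] using hmod _ ih 2 (Or.inl rfl)

theorem IsSemimodule.mem_of_le {x m : ℕ} (hx : x ∈ Δ) (hxm : x ≤ m) (hpar : m % 2 = x % 2) :
    m ∈ Δ := by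
  simpa [show x + 2 * ((m - x) / 2) = m by omega] using hmod.add_two_mul_mem hx ((m - x) / 2)

theorem IsSemimodule.exists_eq_subsemimodule (hΔ : Δ ⊆ semigroup d) (hne : Δ.Nonempty) :
    ∃ i j, j ≤ i ∧ Δ = subsemimodule d i j := by
  classical
  obtain ⟨x, hx⟩ := hne
  have hodd : 2 * d + 1 ∈ semigroup d := Or.inr le_rfl
  have hE : ∃ a, 2 * a ∈ Δ := by
    rcases Nat.mod_two_eq_zero_or_one x with hx2 | hx2
    · exact ⟨x / 2, hmod.mem_of_le hx (by omega) (by omega)⟩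
    · exact ⟨(x + (2 * d + 1)) / 2, hmod.mem_of_le (hmod _ hx _ hodd) (by omega) (by omega)⟩
  have hiΔ : 2 * Nat.find hE ∈ Δ := Nat.find_spec hE
  have hO : ∃ b, 2 * d + 1 + 2 * b ∈ Δ :=
    ⟨Nat.find hE, by simpa [add_comm] using hmod _ hiΔ _ hodd⟩
  have hjΔ : 2 * d + 1 + 2 * Nat.find hO ∈ Δ := Nat.find_spec hO
  refine ⟨Nat.find hE, Nat.find hO, Nat.find_min' hO (by simpa [add_comm] using hmod _ hiΔ _ hodd),
    Set.ext fun m => ⟨fun hm => ?_, ?_⟩⟩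
  · have hmG : m % 2 = 0 ∨ 2 * d + 1 ≤ m := hΔ hm
    rcases Nat.mod_two_eq_zero_or_one m with h2 | h2
    · have := Nat.find_min' hE (m := m / 2) (by rwa [show 2 * (m / 2) = m by omega])
      exact Or.inl ⟨h2, by omega⟩
    · have := Nat.find_min' hO (m := (m - (2 * d + 1)) / 2)
        (by rwa [show 2 * d + 1 + 2 * ((m - (2 * d + 1)) / 2) = m by omega])
      exact Or.inr ⟨h2, by omega⟩
  · rintro (⟨h2, hle⟩ | ⟨h2, hle⟩)
    · exact hmod.mem_of_le hiΔ hle (by omega)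
    · exact hmod.mem_of_le hjΔ hle (by omega)

theorem IsSemimodule.exists_eq_subsemimodule_of_ncard {ℓ : ℕ} (hℓ : 1 ≤ ℓ)
    (hΔ : Δ ⊆ semigroup d) (hcard : (semigroup d \ Δ).ncard = ℓ) :
    ∃ i, ℓ ≤ 2 * i ∧ i ≤ ℓ ∧ Δ = subsemimodule d i (ℓ - i) := by
  have hne : Δ.Nonempty := by
    rw [Set.nonempty_iff_ne_empty]
    rintro rfl
    rw [Set.sdiff_empty, (semigroup_infinite d).ncard] at hcard
    omega
  obtain ⟨i, j, hji, rfl⟩ := hmod.exists_eq_subsemimodule hΔ hne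
  rw [ncard_semigroup_diff_subsemimodule] at hcard
  exact ⟨i, by omega, by omega, by rw [show ℓ - i = j by omega]⟩

end IsSemimodule

-- `ℓ - ℓ / 2` is `⌈ℓ / 2⌉`.
theorem setOf_isSemimodule_ncard_eq_image {ℓ : ℕ} (hℓ1 : 1 ≤ ℓ) (hℓ2 : ℓ ≤ 2 * d) :
    {Δ | Δ ⊆ semigroup d ∧ IsSemimodule d Δ ∧ (semigroup d \ Δ).ncard = ℓ} =
      (fun i => subsemimodule d i (ℓ - i)) '' Set.Icc (ℓ - ℓ / 2) ℓ := by
  ext Δ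
  simp only [Set.mem_ofPred_eq, Set.mem_image, Set.mem_Icc]
  constructor
  · rintro ⟨hΔ, hmod, hcard⟩
    obtain ⟨i, hℓi, hiℓ, rfl⟩ := hmod.exists_eq_subsemimodule_of_ncard hℓ1 hΔ hcard
    exact ⟨i, ⟨by omega, hiℓ⟩, rfl⟩
  · rintro ⟨i, ⟨hℓi, hiℓ⟩, rfl⟩
    refine ⟨subsemimodule_subset d _ _, isSemimodule_subsemimodule (by omega) (by omega), ?_⟩
    rw [ncard_semigroup_diff_subsemimodule]
    omega

end HyperellipticSemigroup

open HyperellipticSemigroup in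
theorem stmt9_general (d ℓ : ℕ) (hℓ1 : 1 ≤ ℓ) (hℓ2 : ℓ ≤ 2 * d)
    (Γ : Set ℕ) (hΓ : Γ = {m | ∃ a b : ℕ, m = 2 * a + (2 * d + 1) * b})
    (Δ : Set ℕ) (hΔΓ : Δ ⊆ Γ) (hmod : ∀ x ∈ Δ, ∀ g ∈ Γ, x + g ∈ Δ)
    (hcard : (Γ \ Δ).ncard = ℓ) :
    ((Odd ℓ → ∃ i : ℕ, ℓ < 2 * i ∧ i ≤ ℓ ∧
        Δ = {m | ∃ g ∈ Γ, m = 2 * i + g} ∪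
              {m | ∃ g ∈ Γ, m = 2 * d + 1 + 2 * (ℓ - i) + g}) ∧
      (Even ℓ → (∃ i : ℕ, ℓ < 2 * i ∧ i ≤ ℓ ∧
        Δ = {m | ∃ g ∈ Γ, m = 2 * i + g} ∪
              {m | ∃ g ∈ Γ, m = 2 * d + 1 + 2 * (ℓ - i) + g}) ∨
        Δ = {m | ∃ g ∈ Γ, m = ℓ + g})) ∧
    {Δ' : Set ℕ | Δ' ⊆ Γ ∧ (∀ x ∈ Δ', ∀ g ∈ Γ, x + g ∈ Δ') ∧
        (Γ \ Δ').ncard = ℓ}.ncard = ℓ / 2 + 1 := by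
  subst hΓ
  rw [setOf_eq_semigroup d] at hΔΓ hmod hcard ⊢
  obtain ⟨i, hℓi, hiℓ, rfl⟩ := IsSemimodule.exists_eq_subsemimodule_of_ncard hmod hℓ1 hΔΓ hcard
  have hunion := setOf_add_semigroup_union_eq_subsemimodule (d := d) (i := i) (j := ℓ - i)
    (by omega) (by omega)
  refine ⟨⟨fun hodd => ⟨i, ?_, hiℓ, hunion.symm⟩, fun heven => ?_⟩, ?_⟩
  · rcases hodd with ⟨k, rfl⟩
    omega
  · rcases hℓi.lt_or_eq with hlt | heq
    · exact Or.inl ⟨i, hlt, hiℓ, hunion.symm⟩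
    · right
      rw [heq, setOf_add_semigroup_eq_subsemimodule, show 2 * i - i = i by omega]
  · have hset := setOf_isSemimodule_ncard_eq_image hℓ1 hℓ2
    unfold IsSemimodule at hset
    rw [hset,
      Set.ncard_image_of_injective _ fun a b h => subsemimodule_left_injective h,
      ← Finset.coe_Icc, Set.ncard_coe_finset, Nat.card_Icc]
    omega

/-- classification of Γ-subsemimodules of Γ = ⟨2, 2d+1⟩ with
complement of size ℓ, 1 ≤ ℓ ≤ 2d, and their count #[ℓ/2, ℓ] = ⌊ℓ/2⌋ + 1. -/
theorem stmt9 (d ℓ : ℕ) (hd : 1 ≤ d) (hℓ1 : 1 ≤ ℓ) (hℓ2 : ℓ ≤ 2 * d)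
    (Γ : Set ℕ) (hΓ : Γ = {m | ∃ a b : ℕ, m = 2 * a + (2 * d + 1) * b})
    (Δ : Set ℕ) (hΔΓ : Δ ⊆ Γ) (hmod : ∀ x ∈ Δ, ∀ g ∈ Γ, x + g ∈ Δ)
    (hcard : (Γ \ Δ).ncard = ℓ) :
    ((Odd ℓ → ∃ i : ℕ, ℓ < 2 * i ∧ i ≤ ℓ ∧
        Δ = {m | ∃ g ∈ Γ, m = 2 * i + g} ∪
              {m | ∃ g ∈ Γ, m = 2 * d + 1 + 2 * (ℓ - i) + g}) ∧
      (Even ℓ → (∃ i : ℕ, ℓ < 2 * i ∧ i ≤ ℓ ∧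
        Δ = {m | ∃ g ∈ Γ, m = 2 * i + g} ∪
              {m | ∃ g ∈ Γ, m = 2 * d + 1 + 2 * (ℓ - i) + g}) ∨
        Δ = {m | ∃ g ∈ Γ, m = ℓ + g})) ∧
    {Δ' : Set ℕ | Δ' ⊆ Γ ∧ (∀ x ∈ Δ', ∀ g ∈ Γ, x + g ∈ Δ') ∧
        (Γ \ Δ').ncard = ℓ}.ncard = ℓ / 2 + 1 :=
  stmt9_general d ℓ hℓ1 hℓ2 Γ hΓ Δ hΔΓ hmod hcard
end

section
/- Let Γ be a monomial numerical semigroup, i.e., for every x ∈ ℕ \ Γ one has Γ ∩ (x + Γ) ⊆ [c(x), ∞), where c(x) = min{n : [n,∞) ⊆ Γ ∪ (x + Γ)}. Let Δ be a Γ-subsemimodule with finite complement and conductor c(Δ) := min{i ∈ Δ : i + ℕ ⊆ Δ}. If γ₁ > γ₂ are two minimal generators of Δ, then every element σ ∈ (γ₁ + Γ) ∩ (γ₂ + Γ) satisfies σ ≥ c(Δ). -/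
/-!
Write `x = γ₁ - γ₂`. Minimality of `γ₁` forces `x ∉ Γ`, and `σ = γ₁ + g₁ = γ₂ + g₂` gives
`g₂ = x + g₁ ∈ Γ ∩ (x + Γ)`, so monomiality yields `c(x) ≤ g₂`. Hence every `k ≥ σ` satisfies
`k - γ₂ ≥ c(x)`, i.e. `k ∈ (γ₂ + Γ) ∪ (γ₁ + Γ) ⊆ Δ`, and `σ` bounds the conductor of `Δ`.
-/

/-- `[n, ∞) ⊆ Γ ∪ (x + Γ)`; the paper's `c(x)` is the least such `n`. -/
def CoversFrom (Γ : Set ℕ) (x n : ℕ) : Prop :=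
  ∀ k : ℕ, n ≤ k → k ∈ Γ ∨ ∃ g ∈ Γ, k = x + g

theorem exists_coversFrom_of_finite_compl {Γ : Set ℕ} (hΓcof : Γᶜ.Finite) (x : ℕ) :
    ∃ n, CoversFrom Γ x n := by
  obtain ⟨b, hb⟩ := hΓcof.bddAbove
  refine ⟨b + 1, fun k hk => Or.inl ?_⟩
  by_contra hk
  exact absurd (hb hk) (by omega)

theorem sub_notMem_of_minimal {Γ Δ : Set ℕ} {γ₁ γ₂ : ℕ} (h21 : γ₂ < γ₁) (hγ₂ : γ₂ ∈ Δ)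
    (hmin₁ : ¬ ∃ d ∈ Δ, ∃ g ∈ Γ, g ≠ 0 ∧ γ₁ = d + g) : γ₁ - γ₂ ∉ Γ :=
  fun hx => hmin₁ ⟨γ₂, hγ₂, γ₁ - γ₂, hx, by omega, by omega⟩

theorem mem_of_coversFrom {Γ Δ : Set ℕ} (hmod : ∀ d ∈ Δ, ∀ g ∈ Γ, d + g ∈ Δ)
    {γ₁ γ₂ n : ℕ} (hγ₁ : γ₁ ∈ Δ) (hγ₂ : γ₂ ∈ Δ) (h21 : γ₂ ≤ γ₁)
    (hn : CoversFrom Γ (γ₁ - γ₂) n) {k : ℕ} (hk : γ₂ + n ≤ k) : k ∈ Δ := by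
  obtain h | ⟨g, hg, hkg⟩ := hn (k - γ₂) (by omega)
  · simpa [Nat.add_sub_cancel' (show γ₂ ≤ k by omega)] using hmod γ₂ hγ₂ _ h
  · simpa [show k = γ₁ + g by omega] using hmod γ₁ hγ₁ g hg

theorem stmt11_general (Γ : Set ℕ)
    (hΓcof : (Γᶜ).Finite)
    (hmono : ∀ x : ℕ, x ∉ Γ → ∀ m ∈ Γ, (∃ g ∈ Γ, m = x + g) →
      sInf {n : ℕ | ∀ k : ℕ, n ≤ k → k ∈ Γ ∨ ∃ g ∈ Γ, k = x + g} ≤ m)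
    (Δ : Set ℕ) (hmod : ∀ d ∈ Δ, ∀ g ∈ Γ, d + g ∈ Δ)
    (γ₁ γ₂ : ℕ) (h21 : γ₂ < γ₁) (hγ₁ : γ₁ ∈ Δ) (hγ₂ : γ₂ ∈ Δ)
    (hmin₁ : ¬ ∃ d ∈ Δ, ∃ g ∈ Γ, g ≠ 0 ∧ γ₁ = d + g) :
    ∀ σ : ℕ, (∃ g ∈ Γ, σ = γ₁ + g) → (∃ g ∈ Γ, σ = γ₂ + g) →
      sInf {i : ℕ | i ∈ Δ ∧ ∀ k : ℕ, i ≤ k → k ∈ Δ} ≤ σ := by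
  rintro σ ⟨g₁, hg₁, rfl⟩ ⟨g₂, hg₂, hσ⟩
  have hx : γ₁ - γ₂ ∉ Γ := sub_notMem_of_minimal h21 hγ₂ hmin₁
  have hc : sInf {n | CoversFrom Γ (γ₁ - γ₂) n} ≤ g₂ :=
    hmono _ hx g₂ hg₂ ⟨g₁, hg₁, by omega⟩
  have hcov : CoversFrom Γ (γ₁ - γ₂) (sInf {n | CoversFrom Γ (γ₁ - γ₂) n}) :=
    Nat.sInf_mem (exists_coversFrom_of_finite_compl hΓcof _)
  exact Nat.sInf_le ⟨hmod γ₁ hγ₁ g₁ hg₁,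
    fun k hk => mem_of_coversFrom hmod hγ₁ hγ₂ h21.le hcov (by omega)⟩

/-- for a monomial numerical semigroup Γ and a Γ-subsemimodule Δ
with minimal generators γ₁ > γ₂, every common element of γ₁ + Γ and γ₂ + Γ is
at least the conductor c(Δ). -/
theorem stmt11 (Γ : Set ℕ)
    (hΓ0 : 0 ∈ Γ) (hΓadd : ∀ a ∈ Γ, ∀ b ∈ Γ, a + b ∈ Γ) (hΓcof : (Γᶜ).Finite)
    (hmono : ∀ x : ℕ, x ∉ Γ → ∀ m ∈ Γ, (∃ g ∈ Γ, m = x + g) →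
      sInf {n : ℕ | ∀ k : ℕ, n ≤ k → k ∈ Γ ∨ ∃ g ∈ Γ, k = x + g} ≤ m)
    (Δ : Set ℕ) (hΔΓ : Δ ⊆ Γ) (hmod : ∀ d ∈ Δ, ∀ g ∈ Γ, d + g ∈ Δ)
    (hfin : (Γ \ Δ).Finite)
    (γ₁ γ₂ : ℕ) (h21 : γ₂ < γ₁) (hγ₁ : γ₁ ∈ Δ) (hγ₂ : γ₂ ∈ Δ)
    (hmin₁ : ¬ ∃ d ∈ Δ, ∃ g ∈ Γ, g ≠ 0 ∧ γ₁ = d + g)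
    (hmin₂ : ¬ ∃ d ∈ Δ, ∃ g ∈ Γ, g ≠ 0 ∧ γ₂ = d + g) :
    ∀ σ : ℕ, (∃ g ∈ Γ, σ = γ₁ + g) → (∃ g ∈ Γ, σ = γ₂ + g) →
      sInf {i : ℕ | i ∈ Δ ∧ ∀ k : ℕ, i ≤ k → k ∈ Δ} ≤ σ :=
  stmt11_general Γ hΓcof hmono Δ hmod γ₁ γ₂ h21 hγ₁ hγ₂ hmin₁
end

section
/- Let Γ = ⟨p, q⟩ with gcd(p, q) = 1, Δ ⊆ Γ a Γ-subsemimodule with finite nonempty complement, γ_Δ = max(Γ \ Δ), and m(Δ) = Δ ∪ {γ_Δ}. Then the set difference of minimal generating sets satisfies T_{m(Δ)} \ T_Δ = {γ_Δ}, and every generator γ ∈ T_Δ \ T_{m(Δ)} is of the form γ = γ_Δ + x with x ∈ {p, q}. -/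
/-!
Adjoining γ_Δ to Δ creates exactly one new generator, γ_Δ itself, because Δ is closed under
adding Γ and γ_Δ ∉ Δ. A generator γ of Δ that is lost must be γ_Δ + g with 0 ≠ g ∈ Γ; by
maximality of γ_Δ every γ_Δ + x with 0 ≠ x ∈ Γ lies in Δ, so g cannot split as a sum of two
nonzero elements of Γ, and the only such elements of ⟨p, q⟩ are p and q.
-/

section MinimalGenerators

variable {M : Type*}

def minimalGenerators [Zero M] [Add M] (Γ D : Set M) : Set M :=
  {x | x ∈ D ∧ ¬ ∃ d ∈ D, ∃ g ∈ Γ, g ≠ 0 ∧ x = d + g}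

variable [AddMonoid M] {Γ D : Set M} {c : M}

theorem mem_minimalGenerators_of_subset {E : Set M} (hDE : D ⊆ E) {x : M} (hxD : x ∈ D)
    (hxE : x ∈ minimalGenerators Γ E) : x ∈ minimalGenerators Γ D :=
  ⟨hxD, fun ⟨d, hd, hdec⟩ => hxE.2 ⟨d, hDE hd, hdec⟩⟩

theorem minimalGenerators_union_singleton_diff [IsLeftCancelAdd M] (hc : c ∉ D)
    (hmod : ∀ d ∈ D, ∀ g ∈ Γ, d + g ∈ D) :
    minimalGenerators Γ (D ∪ {c}) \ minimalGenerators Γ D = {c} := by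
  ext x
  constructor
  · rintro ⟨hxE, hxD⟩
    rcases hxE.1 with hx | hx
    · exact absurd (mem_minimalGenerators_of_subset Set.subset_union_left hx hxE) hxD
    · exact hx
  · rintro rfl
    refine ⟨⟨Or.inr rfl, ?_⟩, fun hxD => hc hxD.1⟩
    rintro ⟨d, hd | rfl, g, hg, hg0, hdec⟩
    · exact hc (hdec ▸ hmod d hd g hg)
    · exact hg0 (left_eq_add.mp hdec)

theorem exists_eq_add_of_mem_minimalGenerators_diff {γ : M}
    (hγ : γ ∈ minimalGenerators Γ D \ minimalGenerators Γ (D ∪ {c})) :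
    ∃ g ∈ Γ, g ≠ 0 ∧ γ = c + g := by
  obtain ⟨⟨hγD, hγmin⟩, hγnot⟩ := hγ
  have hdec : ∃ d ∈ D ∪ {c}, ∃ g ∈ Γ, g ≠ 0 ∧ γ = d + g := by
    by_contra h
    exact hγnot ⟨Or.inl hγD, h⟩
  obtain ⟨d, hd | rfl, hrest⟩ := hdec
  · exact absurd ⟨d, hd, hrest⟩ hγmin
  · exact hrest

theorem not_eq_add_add_of_mem_minimalGenerators {g x y : M}
    (hγ : c + g ∈ minimalGenerators Γ D) (hcx : c + x ∈ D) (hy : y ∈ Γ) (hy0 : y ≠ 0) :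
    g ≠ x + y := by
  rintro rfl
  exact hγ.2 ⟨c + x, hcx, y, hy, hy0, (add_assoc c x y).symm⟩

end MinimalGenerators

theorem Nat.add_mem_of_forall_mem_diff_le {Γ D : Set ℕ} (hadd : ∀ a ∈ Γ, ∀ b ∈ Γ, a + b ∈ Γ)
    {c : ℕ} (hc : c ∈ Γ) (hmax : ∀ x ∈ Γ \ D, x ≤ c) {x : ℕ} (hx : x ∈ Γ) (hx0 : x ≠ 0) :
    c + x ∈ D := by
  by_contra hcx
  have := hmax _ ⟨hadd c hc x hx, hcx⟩
  omega

section TwoGenerated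

def twoGenerated (p q : ℕ) : Set ℕ := {m | ∃ a b : ℕ, m = a * p + b * q}

variable {p q : ℕ}

theorem add_mem_twoGenerated {m n : ℕ} (hm : m ∈ twoGenerated p q)
    (hn : n ∈ twoGenerated p q) : m + n ∈ twoGenerated p q := by
  obtain ⟨a, b, rfl⟩ := hm
  obtain ⟨a', b', rfl⟩ := hn
  exact ⟨a + a', b + b', by ring⟩

theorem exists_eq_add_of_mem_twoGenerated {g : ℕ} (hg : g ∈ twoGenerated p q)
    (hg0 : g ≠ 0) (hgp : g ≠ p) (hgq : g ≠ q) :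
    ∃ x ∈ twoGenerated p q, ∃ y ∈ twoGenerated p q, x ≠ 0 ∧ y ≠ 0 ∧ g = x + y := by
  obtain ⟨a, b, rfl⟩ := hg
  by_cases hap : a ≠ 0 ∧ p ≠ 0
  · obtain ⟨a, rfl⟩ := Nat.exists_eq_add_one_of_ne_zero hap.1
    refine ⟨p, ⟨1, 0, by ring⟩, a * p + b * q, ⟨a, b, rfl⟩, hap.2, ?_, by ring⟩
    rintro h
    exact hgp (by linarith)
  · have hap0 : a * p = 0 := by
      rcases not_and_or.mp hap with h | h <;> simp_all
    rw [hap0, zero_add] at hg0 hgq ⊢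
    obtain ⟨b, rfl⟩ := Nat.exists_eq_add_one_of_ne_zero (left_ne_zero_of_mul hg0)
    refine ⟨q, ⟨0, 1, by ring⟩, b * q, ⟨0, b, by ring⟩, right_ne_zero_of_mul hg0, ?_, by ring⟩
    rintro h
    exact hgq (by linarith)

end TwoGenerated

theorem stmt14_general (p q : ℕ)
    (Γ : Set ℕ) (hΓ : Γ = {m | ∃ a b : ℕ, m = a * p + b * q})
    (Δ : Set ℕ) (hmod : ∀ d ∈ Δ, ∀ g ∈ Γ, d + g ∈ Δ)
    (γΔ : ℕ) (hγΔ : γΔ ∈ Γ \ Δ) (hmax : ∀ x ∈ Γ \ Δ, x ≤ γΔ)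
    (T : Set ℕ → Set ℕ)
    (hT : T = fun D => {x | x ∈ D ∧ ¬ ∃ d ∈ D, ∃ g ∈ Γ, g ≠ 0 ∧ x = d + g}) :
    T (Δ ∪ {γΔ}) \ T Δ = {γΔ} ∧
      ∀ γ ∈ T Δ \ T (Δ ∪ {γΔ}), γ = γΔ + p ∨ γ = γΔ + q := by
  have hTmin : T = minimalGenerators Γ := hT
  have hΓ₂ : Γ = twoGenerated p q := hΓ
  subst hTmin hΓ₂
  refine ⟨minimalGenerators_union_singleton_diff hγΔ.2 hmod, fun γ hγ => ?_⟩
  obtain ⟨g, hg, hg0, rfl⟩ := exists_eq_add_of_mem_minimalGenerators_diff hγ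
  by_contra hpq
  obtain ⟨x, hx, y, hy, hx0, hy0, hxy⟩ := exists_eq_add_of_mem_twoGenerated hg hg0
    (fun h => hpq (Or.inl (by rw [h]))) (fun h => hpq (Or.inr (by rw [h])))
  have hγx : γΔ + x ∈ Δ :=
    Nat.add_mem_of_forall_mem_diff_le (fun _ hm _ hn => add_mem_twoGenerated hm hn)
      hγΔ.1 hmax hx hx0
  exact not_eq_add_add_of_mem_minimalGenerators hγ.1 hγx hy hy0 hxy

/-- for Γ = ⟨p,q⟩ and m(Δ) = Δ ∪ {γ_Δ}, the minimal generating
sets satisfy T_{m(Δ)} \ T_Δ = {γ_Δ}, and every γ ∈ T_Δ \ T_{m(Δ)} equals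
γ_Δ + p or γ_Δ + q. -/
theorem stmt14 (p q : ℕ) (hp : 2 ≤ p) (hq : 2 ≤ q) (hcop : Nat.Coprime p q)
    (Γ : Set ℕ) (hΓ : Γ = {m | ∃ a b : ℕ, m = a * p + b * q})
    (Δ : Set ℕ) (hΔΓ : Δ ⊆ Γ) (hmod : ∀ d ∈ Δ, ∀ g ∈ Γ, d + g ∈ Δ)
    (hfin : (Γ \ Δ).Finite) (hne : (Γ \ Δ).Nonempty)
    (γΔ : ℕ) (hγΔ : γΔ ∈ Γ \ Δ) (hmax : ∀ x ∈ Γ \ Δ, x ≤ γΔ)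
    (T : Set ℕ → Set ℕ)
    (hT : T = fun D => {x | x ∈ D ∧ ¬ ∃ d ∈ D, ∃ g ∈ Γ, g ≠ 0 ∧ x = d + g}) :
    T (Δ ∪ {γΔ}) \ T Δ = {γΔ} ∧
      ∀ γ ∈ T Δ \ T (Δ ∪ {γΔ}), γ = γΔ + p ∨ γ = γΔ + q :=
  stmt14_general p q Γ hΓ Δ hmod γΔ hγΔ hmax T hT
end

section
/- Let Γ = ⟨2, 2d+1⟩. For every integer k with 1 ≤ k ≤ d, the number of Γ-subsemimodules Δ ⊆ Γ with #(Γ \ Δ) = 2k equals the number with #(Γ \ Δ) = 2k+1, and both equal k + 1. -/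
/-!
Γ consists of the even numbers together with all numbers `≥ 2d + 1`. A nonempty Γ-subsemimodule
`Δ` is determined by its least even element `2i` and its least odd element `2d + 1 + 2j`: it
contains every number of the same parity above these. Closure under adding `2d + 1` forces
`j ≤ i ≤ j + 2d + 1`, and the complement has `i + j` elements. For `1 ≤ n ≤ 2d + 1` the
subsemimodules with `n` gaps are therefore indexed by `j ∈ [0, n / 2]`, so there are `n / 2 + 1`
of them; `n = 2k` and `n = 2k + 1` both give `k + 1`.
-/

namespace NumericalSemigroupTwo

def gamma (d : ℕ) : Set ℕ := {m | m % 2 = 0 ∨ 2 * d + 1 ≤ m}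

def IsSemimodule (Γ Δ : Set ℕ) : Prop := Δ ⊆ Γ ∧ ∀ x ∈ Δ, ∀ g ∈ Γ, x + g ∈ Δ

def stdSemimodule (d i j : ℕ) : Set ℕ :=
  {m | (m % 2 = 0 ∧ 2 * i ≤ m) ∨ (m % 2 = 1 ∧ 2 * d + 1 + 2 * j ≤ m)}

variable {d i j : ℕ}

theorem setOf_two_mul_add_eq_gamma (d : ℕ) :
    {m : ℕ | ∃ a b : ℕ, m = 2 * a + (2 * d + 1) * b} = gamma d := by
  ext m
  simp only [gamma, Set.mem_ofPred_eq]
  constructor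
  · rintro ⟨a, b, rfl⟩
    rcases Nat.even_or_odd' b with ⟨c, rfl | rfl⟩
    · left
      rw [show 2 * a + (2 * d + 1) * (2 * c) = 2 * (a + (2 * d + 1) * c) by ring]
      omega
    · rw [show 2 * a + (2 * d + 1) * (2 * c + 1) = 2 * (a + (2 * d + 1) * c) + (2 * d + 1) by ring]
      omega
  · intro h
    by_cases h2 : m % 2 = 0
    · exact ⟨m / 2, 0, by omega⟩
    · exact ⟨(m - (2 * d + 1)) / 2, 1, by omega⟩

theorem gamma_infinite (d : ℕ) : (gamma d).Infinite :=
  (Set.Ici_infinite (2 * d + 1)).mono fun _ hm => Or.inr hm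

theorem gamma_diff_stdSemimodule (d i j : ℕ) :
    gamma d \ stdSemimodule d i j =
      ↑((Finset.range i).image (2 * ·) ∪ (Finset.range j).image (2 * d + 1 + 2 * ·)) := by
  ext m
  simp only [gamma, stdSemimodule, Set.mem_sdiff, Set.mem_ofPred_eq, Finset.coe_union,
    Finset.coe_image, Finset.coe_range, Set.mem_union, Set.mem_image, Set.mem_Iio]
  constructor
  · rintro ⟨hm, hnot⟩
    by_cases h2 : m % 2 = 0
    · exact Or.inl ⟨m / 2, by omega, by omega⟩
    · exact Or.inr ⟨(m - (2 * d + 1)) / 2, by omega, by omega⟩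
  · rintro (⟨t, ht, rfl⟩ | ⟨t, ht, rfl⟩) <;> omega

theorem ncard_gamma_diff_stdSemimodule (d i j : ℕ) :
    (gamma d \ stdSemimodule d i j).ncard = i + j := by
  rw [gamma_diff_stdSemimodule, Set.ncard_coe_finset, Finset.card_union_of_disjoint,
    Finset.card_image_of_injective _ fun a b h => by omega,
    Finset.card_image_of_injective _ fun a b h => by omega, Finset.card_range, Finset.card_range]
  simp only [Finset.disjoint_left, Finset.mem_image, Finset.mem_range]
  rintro _ ⟨a, -, rfl⟩ ⟨b, -, hb⟩
  omega

theorem isSemimodule_stdSemimodule_iff :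
    IsSemimodule (gamma d) (stdSemimodule d i j) ↔ j ≤ i ∧ i ≤ j + (2 * d + 1) := by
  simp only [IsSemimodule, gamma, stdSemimodule, Set.subset_def, Set.mem_ofPred_eq]
  constructor
  · rintro ⟨-, hclosed⟩
    have hodd := hclosed (2 * i) (Or.inl ⟨by omega, le_rfl⟩) (2 * d + 1) (Or.inr le_rfl)
    have heven := hclosed (2 * d + 1 + 2 * j) (Or.inr ⟨by omega, le_rfl⟩) (2 * d + 1)
      (Or.inr le_rfl)
    omega
  · exact fun h => ⟨fun m hm => by omega, fun x hx g hg => by omega⟩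

theorem stdSemimodule_injective_right {i' j' : ℕ}
    (h : stdSemimodule d i j = stdSemimodule d i' j') : j = j' := by
  have h₁ : 2 * d + 1 + 2 * j ∈ stdSemimodule d i' j' := h ▸ Or.inr ⟨by omega, le_rfl⟩
  have h₂ : 2 * d + 1 + 2 * j' ∈ stdSemimodule d i j := h ▸ Or.inr ⟨by omega, le_rfl⟩
  simp only [stdSemimodule, Set.mem_ofPred_eq] at h₁ h₂
  omega

namespace IsSemimodule

variable {Δ : Set ℕ}

theorem mem_of_le {a m : ℕ} (hΔ : IsSemimodule (gamma d) Δ) (ha : a ∈ Δ) (hle : a ≤ m)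
    (hpar : a % 2 = m % 2) : m ∈ Δ := by
  have h := hΔ.2 a ha (m - a) (Or.inl (by omega))
  rwa [Nat.add_sub_cancel' hle] at h

theorem exists_eq_stdSemimodule (hΔ : IsSemimodule (gamma d) Δ) (hne : Δ.Nonempty) :
    ∃ i j, Δ = stdSemimodule d i j := by
  obtain ⟨x, hx⟩ := hne
  -- `x + (2d + 1)` and `x + (4d + 2)` lie in `Δ`, are `≥ 2d + 1` and have opposite parities.
  have h₁ : x + (2 * d + 1) ∈ Δ := hΔ.2 x hx _ (Or.inr le_rfl)
  have h₂ : x + (4 * d + 2) ∈ Δ := hΔ.2 x hx _ (Or.inl (by omega))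
  obtain ⟨e, he, he2⟩ : ∃ e ∈ Δ, e % 2 = 0 := by
    rcases Nat.mod_two_eq_zero_or_one x with h | h
    exacts [⟨_, h₂, by omega⟩, ⟨_, h₁, by omega⟩]
  obtain ⟨o, ho, ho2, hod⟩ : ∃ o ∈ Δ, o % 2 = 1 ∧ 2 * d + 1 ≤ o := by
    rcases Nat.mod_two_eq_zero_or_one x with h | h
    exacts [⟨_, h₁, by omega, by omega⟩, ⟨_, h₂, by omega, by omega⟩]
  have hEven : {t | 2 * t ∈ Δ}.Nonempty :=
    ⟨e / 2, show 2 * (e / 2) ∈ Δ by rwa [show 2 * (e / 2) = e by omega]⟩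
  have hOdd : {t | 2 * d + 1 + 2 * t ∈ Δ}.Nonempty :=
    ⟨(o - (2 * d + 1)) / 2,
      show 2 * d + 1 + 2 * ((o - (2 * d + 1)) / 2) ∈ Δ by
        rwa [show 2 * d + 1 + 2 * ((o - (2 * d + 1)) / 2) = o by omega]⟩
  have hi : 2 * sInf {t | 2 * t ∈ Δ} ∈ Δ := Nat.sInf_mem hEven
  have hj : 2 * d + 1 + 2 * sInf {t | 2 * d + 1 + 2 * t ∈ Δ} ∈ Δ := Nat.sInf_mem hOdd
  refine ⟨sInf {t | 2 * t ∈ Δ}, sInf {t | 2 * d + 1 + 2 * t ∈ Δ},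
    Set.ext fun m => ⟨fun hm => ?_, fun hm => ?_⟩⟩
  · by_cases h2 : m % 2 = 0
    · have : sInf {t | 2 * t ∈ Δ} ≤ m / 2 :=
        Nat.sInf_le (show 2 * (m / 2) ∈ Δ by rwa [show 2 * (m / 2) = m by omega])
      exact Or.inl ⟨h2, by omega⟩
    · have hmd : 2 * d + 1 ≤ m := (hΔ.1 hm).resolve_left h2
      have : sInf {t | 2 * d + 1 + 2 * t ∈ Δ} ≤ (m - (2 * d + 1)) / 2 :=
        Nat.sInf_le (show 2 * d + 1 + 2 * ((m - (2 * d + 1)) / 2) ∈ Δ by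
          rwa [show 2 * d + 1 + 2 * ((m - (2 * d + 1)) / 2) = m by omega])
      exact Or.inr ⟨by omega, by omega⟩
  · rcases hm with ⟨h2, hle⟩ | ⟨h2, hle⟩
    · exact hΔ.mem_of_le hi hle (by omega)
    · exact hΔ.mem_of_le hj hle (by omega)

end IsSemimodule

theorem setOf_isSemimodule_ncard_eq_image {n : ℕ} (hn : 1 ≤ n) (hnd : n ≤ 2 * d + 1) :
    {Δ | IsSemimodule (gamma d) Δ ∧ (gamma d \ Δ).ncard = n} =
      (fun j => stdSemimodule d (n - j) j) '' Set.Iic (n / 2) := by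
  ext Δ
  simp only [Set.mem_ofPred_eq, Set.mem_image, Set.mem_Iic]
  constructor
  · rintro ⟨hΔ, hcard⟩
    have hne : Δ.Nonempty := by
      -- otherwise the complement is infinite, and its `ncard` is `0`
      by_contra h
      rw [Set.not_nonempty_iff_eq_empty.1 h, Set.sdiff_empty, (gamma_infinite d).ncard] at hcard
      omega
    obtain ⟨i, j, rfl⟩ := hΔ.exists_eq_stdSemimodule hne
    have hij := isSemimodule_stdSemimodule_iff.1 hΔ
    rw [ncard_gamma_diff_stdSemimodule] at hcard
    exact ⟨j, by omega, by rw [show n - j = i by omega]⟩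
  · rintro ⟨j, hj, rfl⟩
    exact ⟨isSemimodule_stdSemimodule_iff.2 ⟨by omega, by omega⟩,
      by rw [ncard_gamma_diff_stdSemimodule]; omega⟩

theorem ncard_setOf_isSemimodule {n : ℕ} (hn : 1 ≤ n) (hnd : n ≤ 2 * d + 1) :
    {Δ | IsSemimodule (gamma d) Δ ∧ (gamma d \ Δ).ncard = n}.ncard = n / 2 + 1 := by
  rw [setOf_isSemimodule_ncard_eq_image hn hnd,
    Set.InjOn.ncard_image fun _ _ _ _ h => stdSemimodule_injective_right h,
    ← Finset.coe_Iic, Set.ncard_coe_finset, Nat.card_Iic]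

end NumericalSemigroupTwo

theorem stmt16_general (d k : ℕ) (hk1 : 1 ≤ k) (hk2 : k ≤ d)
    (Γ : Set ℕ) (hΓ : Γ = {m | ∃ a b : ℕ, m = 2 * a + (2 * d + 1) * b}) :
    {Δ : Set ℕ | Δ ⊆ Γ ∧ (∀ x ∈ Δ, ∀ g ∈ Γ, x + g ∈ Δ) ∧
        (Γ \ Δ).ncard = 2 * k}.ncard = k + 1 ∧
      {Δ : Set ℕ | Δ ⊆ Γ ∧ (∀ x ∈ Δ, ∀ g ∈ Γ, x + g ∈ Δ) ∧
        (Γ \ Δ).ncard = 2 * k + 1}.ncard = k + 1 := by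
  have h_even := NumericalSemigroupTwo.ncard_setOf_isSemimodule (d := d) (n := 2 * k)
    (by omega) (by omega)
  have h_odd := NumericalSemigroupTwo.ncard_setOf_isSemimodule (d := d) (n := 2 * k + 1)
    (by omega) (by omega)
  simp only [NumericalSemigroupTwo.IsSemimodule, and_assoc,
    ← NumericalSemigroupTwo.setOf_two_mul_add_eq_gamma] at h_even h_odd
  subst hΓ
  exact ⟨h_even.trans (by omega), h_odd.trans (by omega)⟩

/-- for Γ = ⟨2, 2d+1⟩ and 1 ≤ k ≤ d, the numbers of
Γ-subsemimodules with complement of size 2k and of size 2k+1 both equal k+1. -/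
theorem stmt16 (d k : ℕ) (hd : 1 ≤ d) (hk1 : 1 ≤ k) (hk2 : k ≤ d)
    (Γ : Set ℕ) (hΓ : Γ = {m | ∃ a b : ℕ, m = 2 * a + (2 * d + 1) * b}) :
    {Δ : Set ℕ | Δ ⊆ Γ ∧ (∀ x ∈ Δ, ∀ g ∈ Γ, x + g ∈ Δ) ∧
        (Γ \ Δ).ncard = 2 * k}.ncard = k + 1 ∧
      {Δ : Set ℕ | Δ ⊆ Γ ∧ (∀ x ∈ Δ, ∀ g ∈ Γ, x + g ∈ Δ) ∧
        (Γ \ Δ).ncard = 2 * k + 1}.ncard = k + 1 :=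
  stmt16_general d k hk1 hk2 Γ hΓ
end
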